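/- arXiv:2306.00801 — 3 statements merged into one kernel-verified Lean document; each statement's English description precedes it below -/
import Mathlib

section
/- Let R be a commutative ring, n ≥ 2, and A an n×n matrix over R such that A * B * A = trace(A * B) • A for every n×n matrix B. Then every 2×2 minor of A vanishes: A i k * A j l - A i l * A j k = 0 for all i, j, k, l. -/
theorem stmt2 {R : Type*} [CommRing R] {n : ℕ} (hn : 2 ≤ n)
    (A : Matrix (Fin n) (Fin n) R)
    (h : ∀ B : Matrix (Fin n) (Fin n) R, A * B * A = (A * B).trace • A) :
    ∀ i j k l, A i k * A j l - A i l * A j k = 0 := by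
  intro i j k l
  have := congrFun (congrFun (h (Matrix.single k j 1)) i) l
  simp [Matrix.mul_apply, Matrix.trace, Matrix.diag, Matrix.single,
    Finset.mul_sum, Finset.sum_mul, ite_and, mul_comm] at this
  linear_combination this
end

section
/- Let R be a commutative ring, n ≥ 2, and A an n×n matrix over R. Then A * B * A = trace(A * B) • A holds for every n×n matrix B if and only if all 2×2 minors of A vanish. -/
theorem stmt3 {R : Type*} [CommRing R] {n : ℕ} (hn : 2 ≤ n)
    (A : Matrix (Fin n) (Fin n) R) :
    (∀ B : Matrix (Fin n) (Fin n) R, A * B * A = (A * B).trace • A) ↔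
      (∀ i j k l, A i k * A j l - A i l * A j k = 0) := by
  constructor
  · intro h i j k l
    have := congrFun (congrFun (h (Matrix.single k j 1)) i) l
    simp [Matrix.mul_apply, Matrix.trace, Matrix.diag, Matrix.single,
      Finset.mul_sum, Finset.sum_mul, mul_ite, ite_mul, Finset.sum_ite_eq',
      Finset.sum_ite_eq, ite_and] at this
    rw [sub_eq_zero]
    rw [this]; ring
  · intro h B
    ext i l
    simp only [Matrix.mul_apply, Matrix.trace, Matrix.diag, Matrix.smul_apply, smul_eq_mul,
      Finset.sum_mul]
    refine Finset.sum_congr rfl fun j _ => ?_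
    refine Finset.sum_congr rfl fun k _ => ?_
    have := h i j k l
    rw [sub_eq_zero] at this
    calc A i k * B k j * A j l = B k j * (A i k * A j l) := by ring
      _ = B k j * (A i l * A j k) := by rw [this]
      _ = A j k * B k j * A i l := by ring
end

section
/- Let R be a commutative ring, n ≥ 2, A an n×n matrix over R all of whose 2×2 minors vanish, and B an arbitrary n×n matrix. Then (A * B)² = trace(A * B) • (A * B). -/
theorem stmt12 {R : Type*} [CommRing R] {n : ℕ} (hn : 2 ≤ n)
    (A B : Matrix (Fin n) (Fin n) R)
    (hA : ∀ i j k l, A i k * A j l = A i l * A j k) :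
    (A * B) ^ 2 = (A * B).trace • (A * B) := by
  rw [sq]
  ext i j
  simp only [Matrix.mul_apply, Matrix.trace, Matrix.diag, Matrix.smul_apply, smul_eq_mul,
    Finset.sum_mul, Finset.mul_sum]
  rw [Finset.sum_comm]
  refine Finset.sum_congr rfl fun k _ => Finset.sum_congr rfl fun p _ =>
    Finset.sum_congr rfl fun q _ => ?_
  linear_combination (B q p * B k j) * hA i p q k
end
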